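/- Let G be a finite group and let 0 → M → F → N → 0 be a short exact sequence of modules over the group ring ℤ[G], where F is a free ℤ[G]-module and N is a module whose underlying abelian group is torsion with the order of every element coprime to |G|. Then M is a projective ℤ[G]-module. -/

import Mathlib

/-!
The kernel `M` is free over `ℤ`, being a subgroup of the free abelian group `F`. Averaging a
`ℤ`-linear section of a free cover `π : P → M` over `G` gives a `ℤ[G]`-linear `a` with
`π ∘ a = |G|`. On the other hand multiplication by `|G|` is invertible on `N`; lifting its inverse
through `F → N` produces `w : M → M` and `φ : F → M` with `φ ∘ f = |G| • w - 1`. Hence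
`1 = π ∘ (a ∘ w) - φ ∘ f` factors through the projective module `P × F`, so `M` is projective.
-/

open Finsupp Submodule Submodule.IsPrincipal

namespace Finsupp

variable {R ι : Type*} [LinearOrder ι]

theorem eq_zero_or_exists_mem_supported_Iic [Semiring R] (m : ι →₀ R) :
    m = 0 ∨ ∃ t ∈ m.support, m ∈ supported R R (Set.Iic t) := by
  rcases eq_or_ne m 0 with rfl | hm
  · exact .inl rfl
  · have hne := support_nonempty_iff.2 hm
    exact .inr ⟨_, m.support.max'_mem hne,
      (mem_supported R m).2 fun i hi => m.support.le_max' i hi⟩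

theorem mem_supported_Iio_of_mem_supported_Iic [Semiring R] {m : ι →₀ R} {a : ι}
    (hm : m ∈ supported R R (Set.Iic a)) (ha : m a = 0) : m ∈ supported R R (Set.Iio a) := by
  refine (mem_supported R m).2 fun i hi => lt_of_le_of_ne ((mem_supported R m).1 hm hi) ?_
  rintro rfl
  exact mem_support_iff.1 hi ha

theorem linearIndependent_of_triangular [Ring R] [NoZeroDivisors R] {s : Set ι} (v : ι → ι →₀ R)
    (hv : ∀ a i, a < i → v a i = 0) (hdiag : ∀ a ∈ s, v a a ≠ 0) :
    LinearIndependent R fun a : s => v a := by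
  rw [linearIndependent_iff]
  intro l hl
  by_contra hl0
  have hne := support_nonempty_iff.2 hl0
  set a := l.support.max' hne
  have ha : a ∈ l.support := l.support.max'_mem hne
  have hcoeff : linearCombination R (fun a : s => v a) l a = l a * v a a := by
    rw [linearCombination_apply, Finsupp.sum, finsetSum_apply, Finset.sum_eq_single a]
    · rfl
    · intro b hb hba
      have hlt : b < a := lt_of_le_of_ne (l.support.le_max' b hb) hba
      rw [smul_apply, hv b a hlt, smul_zero]
    · exact fun h => (h ha).elim
  rw [hl, coe_zero, Pi.zero_apply, eq_comm, mul_eq_zero] at hcoeff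
  exact hcoeff.elim (mem_support_iff.1 ha) (hdiag a a.2)

end Finsupp

namespace Submodule

variable {R ι : Type*} [CommRing R] [LinearOrder ι] (N : Submodule R (ι →₀ R))

/- For a well-ordered index set, the `leadingElement a` with nonzero leading coefficient are
triangular with respect to the order, and they span `N` by well-founded induction. -/
noncomputable def leadingCoeffIdeal (a : ι) : Ideal R :=
  (N ⊓ supported R R (Set.Iic a)).map (lapply a)

variable [IsPrincipalIdealRing R]

noncomputable def leadingElement (a : ι) : ι →₀ R :=
  (mem_map.1 (generator_mem (N.leadingCoeffIdeal a))).choose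

theorem leadingElement_mem (a : ι) : N.leadingElement a ∈ N ⊓ supported R R (Set.Iic a) :=
  (mem_map.1 (generator_mem (N.leadingCoeffIdeal a))).choose_spec.1

theorem leadingElement_apply_self (a : ι) :
    N.leadingElement a a = generator (N.leadingCoeffIdeal a) :=
  (mem_map.1 (generator_mem (N.leadingCoeffIdeal a))).choose_spec.2

theorem leadingElement_apply_of_lt {a i : ι} (h : a < i) : N.leadingElement a i = 0 :=
  (mem_supported' R _).1 (N.leadingElement_mem a).2 i (not_le.2 h)

theorem mem_span_leadingElement [WellFoundedLT ι] (a : ι) {m : ι →₀ R} (hm : m ∈ N)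
    (hma : m ∈ supported R R (Set.Iic a)) :
    m ∈ span R (N.leadingElement '' {a | generator (N.leadingCoeffIdeal a) ≠ 0}) := by
  induction a using WellFoundedLT.induction generalizing m with
  | ind a IH =>
  have below : ∀ m' ∈ N, m' ∈ supported R R (Set.Iio a) →
      m' ∈ span R (N.leadingElement '' {a | generator (N.leadingCoeffIdeal a) ≠ 0}) := by
    intro m' hm' hm'a
    obtain rfl | ⟨t, ht, hm't⟩ := m'.eq_zero_or_exists_mem_supported_Iic
    · exact zero_mem _
    · exact IH t ((mem_supported R m').1 hm'a ht) hm' hm't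
  have hv := N.leadingElement_mem a
  have hv_span : N.leadingElement a ∈
      span R (N.leadingElement '' {a | generator (N.leadingCoeffIdeal a) ≠ 0}) := by
    by_cases hd : generator (N.leadingCoeffIdeal a) = 0
    · exact below _ hv.1 <| mem_supported_Iio_of_mem_supported_Iic hv.2 <|
        (N.leadingElement_apply_self a).trans hd
    · exact subset_span ⟨a, hd, rfl⟩
  obtain ⟨c, hc⟩ : ∃ c : R, m a = c • generator (N.leadingCoeffIdeal a) :=
    (mem_iff_eq_smul_generator _).1 (mem_map_of_mem (f := lapply a) ⟨hm, hma⟩)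
  have hrest := below (m - c • N.leadingElement a) (sub_mem hm (smul_mem _ c hv.1)) <|
    mem_supported_Iio_of_mem_supported_Iic (sub_mem hma (smul_mem _ c hv.2)) (by
      rw [Finsupp.sub_apply, Finsupp.smul_apply, leadingElement_apply_self, hc, sub_self])
  simpa using add_mem hrest (smul_mem _ c hv_span)

variable [IsDomain R]

theorem free_of_wellFoundedLT [WellFoundedLT ι] : Module.Free R N := by
  set s := {a | generator (N.leadingCoeffIdeal a) ≠ 0}
  have hli : LinearIndependent R fun a : s => N.leadingElement a :=
    linearIndependent_of_triangular _ (fun _ _ => N.leadingElement_apply_of_lt)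
      fun a ha => (N.leadingElement_apply_self a).trans_ne ha
  have hspan : span R (Set.range fun a : s => N.leadingElement a) = N := by
    rw [← Set.image_eq_range]
    refine le_antisymm (span_le.2 ?_) fun m hm => ?_
    · rintro _ ⟨a, -, rfl⟩
      exact (N.leadingElement_mem a).1
    · obtain rfl | ⟨t, -, hmt⟩ := m.eq_zero_or_exists_mem_supported_Iic
      · exact zero_mem _
      · exact N.mem_span_leadingElement t hm hmt
  exact .of_basis ((Module.Basis.span hli).map (LinearEquiv.ofEq _ _ hspan))

end Submodule

section PID

variable {R : Type*} [CommRing R] [IsDomain R] [IsPrincipalIdealRing R]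

theorem Submodule.free_of_isPrincipalIdealRing {ι : Type*} (N : Submodule R (ι →₀ R)) :
    Module.Free R N := by
  let : LinearOrder ι := IsWellOrder.linearOrder WellOrderingRel
  have : WellFoundedLT ι := ⟨WellOrderingRel.isWellOrder.wf⟩
  exact N.free_of_wellFoundedLT

theorem Module.Free.of_injective_of_isPrincipalIdealRing {M F : Type*} [AddCommGroup M]
    [Module R M] [AddCommGroup F] [Module R F] [Module.Free R F] (j : M →ₗ[R] F)
    (hj : Function.Injective j) : Module.Free R M := by
  let j' := (Module.Free.chooseBasis R F).repr.toLinearMap ∘ₗ j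
  have hj' : Function.Injective j' := (Module.Free.chooseBasis R F).repr.injective.comp hj
  have := (LinearMap.range j').free_of_isPrincipalIdealRing
  exact .of_equiv (LinearEquiv.ofInjective j' hj').symm

end PID

section Higman

variable {k G M P : Type*} [CommRing k] [Group G] [Finite G]
  [AddCommGroup M] [Module k M] [Module (MonoidAlgebra k G) M]
  [IsScalarTower k (MonoidAlgebra k G) M]
  [AddCommGroup P] [Module k P] [Module (MonoidAlgebra k G) P]
  [IsScalarTower k (MonoidAlgebra k G) P]

theorem exists_comp_eq_card_smul_id [Module.Projective k M] (π : P →ₗ[MonoidAlgebra k G] M)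
    (hπ : Function.Surjective π) :
    ∃ a : M →ₗ[MonoidAlgebra k G] P, π ∘ₗ a = Nat.card G • LinearMap.id := by
  cases nonempty_fintype G
  obtain ⟨σ, hσ⟩ := Module.projective_lifting_property (π.restrictScalars k) LinearMap.id hπ
  refine ⟨σ.sumOfConjugatesEquivariant G, LinearMap.ext fun x => ?_⟩
  have hconj : ∀ g : G, π (σ.conjugate g x) = x := fun g => by
    rw [LinearMap.conjugate_apply, map_smul, ← LinearMap.restrictScalars_apply (R := k),
      ← LinearMap.comp_apply, hσ, LinearMap.id_apply, ← mul_smul, MonoidAlgebra.single_mul_single,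
      inv_mul_cancel, mul_one, ← MonoidAlgebra.one_def, one_smul]
  simp [LinearMap.sumOfConjugatesEquivariant_apply, hconj, Nat.card_eq_fintype_card]

end Higman

section Retract

variable {R M F N : Type*} [Semiring R] [AddCommMonoid M] [Module R M]
  [AddCommMonoid F] [Module R F] [AddCommMonoid N] [Module R N]

theorem Function.Exact.exists_comp_eq {X : Type*} [AddCommMonoid X] [Module R X]
    {f : M →ₗ[R] F} {g : F →ₗ[R] N} (hfg : Function.Exact f g) (hf : Function.Injective f)
    {h : X →ₗ[R] F} (hh : g ∘ₗ h = 0) : ∃ h' : X →ₗ[R] M, f ∘ₗ h' = h := by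
  have hrange : ∀ x, h x ∈ LinearMap.range f := fun x => by
    rw [← hfg.linearMap_ker_eq, LinearMap.mem_ker, ← LinearMap.comp_apply, hh,
      LinearMap.zero_apply]
  refine ⟨(LinearEquiv.ofInjective f hf).symm ∘ₗ h.codRestrict _ hrange, LinearMap.ext fun x => ?_⟩
  exact congrArg Subtype.val ((LinearEquiv.ofInjective f hf).apply_symm_apply _)

theorem Module.Projective.of_comp_add_comp_eq_id {P Q : Type*} [AddCommMonoid P] [Module R P]
    [Module.Projective R P] [AddCommMonoid Q] [Module R Q] [Module.Projective R Q]
    (a : M →ₗ[R] P) (b : P →ₗ[R] M) (c : M →ₗ[R] Q) (d : Q →ₗ[R] M)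
    (h : b ∘ₗ a + d ∘ₗ c = LinearMap.id) : Module.Projective R M :=
  .of_split (a.prod c) (b.coprod d) (by rw [LinearMap.coprod_comp_prod, h])

end Retract

theorem nsmul_bijective_of_coprime_addOrderOf {N : Type*} [AddCommGroup N] {n : ℕ}
    (h : ∀ y : N, (addOrderOf y).Coprime n) : Function.Bijective fun y : N => n • y := by
  refine ⟨fun y z hyz => ?_, fun y => ?_⟩
  · have hdvd : addOrderOf (y - z) ∣ n :=
      addOrderOf_dvd_of_nsmul_eq_zero (by simpa [smul_sub, sub_eq_zero] using hyz)
    rw [← sub_eq_zero, ← AddMonoid.addOrderOf_eq_one_iff,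
      ← Nat.Coprime.gcd_eq_one (h (y - z)), Nat.gcd_eq_left hdvd]
  · obtain ⟨m, hm⟩ := exists_nsmul_eq_self_of_coprime (h y).symm
    exact ⟨m • y, by simpa only [smul_comm m n y] using hm⟩

theorem exists_comp_eq_nsmul_sub_id {R M F N : Type*} [Ring R] [AddCommGroup M] [Module R M]
    [AddCommGroup F] [Module R F] [Module.Projective R F] [AddCommGroup N] [Module R N]
    {f : M →ₗ[R] F} {g : F →ₗ[R] N}
    (hfg : Function.Exact f g) (hf : Function.Injective f) (hg : Function.Surjective g) {n : ℕ}
    (hn : Function.Bijective fun y : N => n • y) :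
    ∃ (w : M →ₗ[R] M) (φ : F →ₗ[R] M), φ ∘ₗ f = n • w - LinearMap.id := by
  let u : N ≃ₗ[R] N := LinearEquiv.ofBijective (n • LinearMap.id) hn
  have hu : ∀ y, n • u.symm y = y := u.apply_symm_apply
  obtain ⟨v, hv⟩ := Module.projective_lifting_property g (u.symm.toLinearMap ∘ₗ g) hg
  have hgv : ∀ x, g (v x) = u.symm (g x) := LinearMap.congr_fun hv
  obtain ⟨w, hw⟩ := hfg.exists_comp_eq hf (h := v ∘ₗ f) <| LinearMap.ext fun x => by
    simp [hgv, hfg.apply_apply_eq_zero]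
  obtain ⟨φ, hφ⟩ := hfg.exists_comp_eq hf (h := n • v - LinearMap.id) <| LinearMap.ext fun x => by
    simp [hgv, hu]
  refine ⟨w, φ, LinearMap.ext fun x => hf ?_⟩
  have hφx := LinearMap.congr_fun hφ (f x)
  have hwx := LinearMap.congr_fun hw x
  simp only [LinearMap.comp_apply, LinearMap.sub_apply, LinearMap.smul_apply,
    LinearMap.id_apply] at hφx hwx ⊢
  rw [hφx, map_sub, map_nsmul, hwx]

theorem projective_of_ses_free_coprimeTorsion_general
    {G : Type} [Group G] [Finite G]
    {M F N : Type}
    [AddCommGroup M] [Module (MonoidAlgebra ℤ G) M]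
    [AddCommGroup F] [Module (MonoidAlgebra ℤ G) F]
    [AddCommGroup N] [Module (MonoidAlgebra ℤ G) N]
    (hF : Module.Free (MonoidAlgebra ℤ G) F)
    (hcop : ∀ x : N, Nat.Coprime (addOrderOf x) (Nat.card G))
    (f : M →ₗ[MonoidAlgebra ℤ G] F) (g : F →ₗ[MonoidAlgebra ℤ G] N)
    (hf : Function.Injective f) (hg : Function.Surjective g)
    (hfg : LinearMap.ker g = LinearMap.range f) :
    Module.Projective (MonoidAlgebra ℤ G) M := by
  have hexact : Function.Exact f g := LinearMap.exact_iff.2 hfg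
  have : Module.Free ℤ F := Module.Free.trans (S := MonoidAlgebra ℤ G)
  have : Module.Free ℤ M :=
    Module.Free.of_injective_of_isPrincipalIdealRing (f.restrictScalars ℤ) hf
  let π := linearCombination (MonoidAlgebra ℤ G) (id : M → M)
  obtain ⟨a, ha⟩ := exists_comp_eq_card_smul_id π (linearCombination_id_surjective _ M)
  obtain ⟨w, φ, hφ⟩ := exists_comp_eq_nsmul_sub_id hexact hf hg
    (nsmul_bijective_of_coprime_addOrderOf hcop)
  refine Module.Projective.of_comp_add_comp_eq_id (a ∘ₗ w) π (-f) φ ?_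
  rw [LinearMap.comp_neg, ← LinearMap.comp_assoc, ha, hφ, LinearMap.smul_comp, LinearMap.id_comp]
  abel

/-- Let `G` be a finite group and let `0 → M → F → N → 0` be a short
exact sequence of `ℤ[G]`-modules, where `F` is a free `ℤ[G]`-module and the underlying
abelian group of `N` is torsion with the order of every element coprime to `|G|`.
Then `M` is a projective `ℤ[G]`-module. -/
theorem projective_of_ses_free_coprimeTorsion
    {G : Type} [Group G] [Finite G]
    {M F N : Type}
    [AddCommGroup M] [Module (MonoidAlgebra ℤ G) M]
    [AddCommGroup F] [Module (MonoidAlgebra ℤ G) F]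
    [AddCommGroup N] [Module (MonoidAlgebra ℤ G) N]
    (hF : Module.Free (MonoidAlgebra ℤ G) F)
    (htor : ∀ x : N, IsOfFinAddOrder x)
    (hcop : ∀ x : N, Nat.Coprime (addOrderOf x) (Nat.card G))
    (f : M →ₗ[MonoidAlgebra ℤ G] F) (g : F →ₗ[MonoidAlgebra ℤ G] N)
    (hf : Function.Injective f) (hg : Function.Surjective g)
    (hfg : LinearMap.ker g = LinearMap.range f) :
    Module.Projective (MonoidAlgebra ℤ G) M :=
  projective_of_ses_free_coprimeTorsion_general hF hcop f g hf hg hfg
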